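/- Let S : ℝ → M₂(ℝ) be a continuous family of symmetric positive-definite 2×2 real matrices, and let α = (α₁, α₂) : ℝ → ℝ² be a differentiable solution of the linear ODE α̇(t) = J·S(t)·α(t), where J is the matrix with rows (0, −1) and (1, 0), such that α(t) ≠ 0 for every t. Then α₁(t)·α̇₂(t) − α₂(t)·α̇₁(t) = α(t)ᵀ S(t) α(t) > 0 for every t ∈ ℝ; consequently any continuous argument θ(t) of α₁(t) + i α₂(t) is strictly increasing. -/

import Mathlib

/-!
Since `J` is the rotation by `π/2`, the cross product `α₁ v₂ − α₂ v₁` of `α` with `J v` is the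
dot product `α ⬝ᵥ v`; for `v = S α` this is positive by positive-definiteness.
For the argument, near any `t₀` the function `θ t₀ + arg (z s / z t₀)`, with `z = α₁ + i α₂`, is
a differentiable continuous argument of `z`; two continuous arguments that agree at `t₀` agree
near `t₀`, because `exp (· * I)` is injective on short intervals. Hence
`θ̇ = Im (ż / z) = (α₁ α̇₂ − α₂ α̇₁) / |α|² > 0`.
-/

open Matrix Complex Filter Topology Set

theorem eventuallyEq_of_exp_mul_I_eq {X : Type*} [TopologicalSpace X] {θ φ : X → ℝ} {x : X}
    (hθ : ContinuousAt θ x) (hφ : ContinuousAt φ x) (hx : θ x = φ x)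
    (h : ∀ᶠ s in 𝓝 x, cexp (θ s * I) = cexp (φ s * I)) : θ =ᶠ[𝓝 x] φ := by
  have hnhds : Icc (θ x - 1) (θ x + 1) ∈ 𝓝 (θ x) := Icc_mem_nhds (by linarith) (by linarith)
  have hlen : θ x + 1 - (θ x - 1) < 2 * Real.pi := by linarith [Real.pi_gt_three]
  filter_upwards [h, hθ hnhds, hφ (by rwa [← hx])] with s hs hθs hφs
  exact Circle.exp_injOn_Icc hlen hθs hφs (Circle.ext (by simpa only [Circle.coe_exp] using hs))

theorem hasDerivAt_of_eq_norm_mul_exp_mul_I {z : ℝ → ℂ} {θ : ℝ → ℝ} {t₀ : ℝ} {w : ℂ}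
    (hz : HasDerivAt z w t₀) (hz₀ : z t₀ ≠ 0) (hθ : ContinuousAt θ t₀)
    (hzθ : ∀ᶠ s in 𝓝 t₀, z s = (‖z s‖ : ℝ) * cexp (θ s * I)) :
    HasDerivAt θ (w / z t₀).im t₀ := by
  set φ : ℝ → ℝ := fun s => θ t₀ + arg (z s / z t₀)
  have h1 : z t₀ / z t₀ ∈ slitPlane := by simp [hz₀]
  have hφ : HasDerivAt φ (w / z t₀).im t₀ := by
    have hlog := (imCLM.hasFDerivAt.comp_hasDerivAt t₀
      ((hz.div_const (z t₀)).clog_real h1)).const_add (θ t₀)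
    simpa [φ, hz₀, log_im] using hlog
  have hzφ (s : ℝ) : z s = (‖z s‖ : ℝ) * cexp (φ s * I) := calc
    z s = z t₀ * (z s / z t₀) := (mul_div_cancel₀ _ hz₀).symm
    _ = (‖z t₀‖ : ℝ) * cexp (θ t₀ * I) * ((‖z s / z t₀‖ : ℝ) * cexp (arg (z s / z t₀) * I)) := by
      rw [← hzθ.self_of_nhds, norm_mul_exp_arg_mul_I]
    _ = (‖z s‖ : ℝ) * cexp (φ s * I) := by
      have : (‖z t₀‖ : ℂ) ≠ 0 := by simpa using hz₀
      rw [norm_div]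
      push_cast [φ, add_mul, exp_add]
      field_simp
  refine hφ.congr_of_eventuallyEq (eventuallyEq_of_exp_mul_I_eq hθ hφ.continuousAt ?_ ?_)
  · simp [φ, hz₀]
  · filter_upwards [hzθ, hz.continuousAt.eventually_ne hz₀] with s hs hs₀
    exact mul_left_cancel₀ (by simpa using hs₀) (hs.symm.trans (hzφ s))

theorem hasDerivAt_of_planar_eq_norm_mul_exp_mul_I {α : ℝ → Fin 2 → ℝ} {α' : Fin 2 → ℝ}
    {θ : ℝ → ℝ} {t : ℝ} (hα : HasDerivAt α α' t) (hα₀ : α t ≠ 0) (hθ : ContinuousAt θ t)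
    (hαθ : ∀ᶠ s in 𝓝 t, (α s 0 : ℂ) + (α s 1 : ℝ) * I
      = (‖(α s 0 : ℂ) + (α s 1 : ℝ) * I‖ : ℝ) * cexp (θ s * I)) :
    HasDerivAt θ ((α t 0 * α' 1 - α t 1 * α' 0) / (α t ⬝ᵥ α t)) t := by
  have hz : HasDerivAt (fun s => (α s 0 : ℂ) + (α s 1 : ℝ) * I) ((α' 0 : ℂ) + (α' 1 : ℝ) * I) t :=
    (hasDerivAt_pi.mp hα 0).ofReal_comp.add ((hasDerivAt_pi.mp hα 1).ofReal_comp.mul_const I)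
  have hz₀ : (α t 0 : ℂ) + (α t 1 : ℝ) * I ≠ 0 := by
    contrapose! hα₀
    ext i
    fin_cases i
    · simpa using congrArg re hα₀
    · simpa using congrArg im hα₀
  convert hasDerivAt_of_eq_norm_mul_exp_mul_I hz hz₀ hθ hαθ using 1
  simp only [div_im, normSq_apply, dotProduct, Fin.sum_univ_two, add_re, add_im, mul_re, mul_im,
    ofReal_re, ofReal_im, I_re, I_im, mul_zero, mul_one, sub_self, add_zero, zero_add]
  ring

theorem cross_J_mulVec (a b : Fin 2 → ℝ) :
    a 0 * (!![0, -1; 1, 0] *ᵥ b) 1 - a 1 * (!![0, -1; 1, 0] *ᵥ b) 0 = a ⬝ᵥ b := by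
  simp [mulVec, dotProduct, Fin.sum_univ_two]

theorem transverse_linearized_flow_rotates
    (S : ℝ → Matrix (Fin 2) (Fin 2) ℝ)
    (hSpos : ∀ t, (S t).PosDef)
    (α : ℝ → Fin 2 → ℝ)
    (hODE : ∀ t, HasDerivAt α ((Matrix.of ![![0, -1], ![1, 0]] * S t).mulVec (α t)) t)
    (hne : ∀ t, α t ≠ 0) :
    (∀ t : ℝ,
      α t 0 * deriv (fun s => α s 1) t - α t 1 * deriv (fun s => α s 0) t
        = α t ⬝ᵥ (S t).mulVec (α t)
      ∧ 0 < α t ⬝ᵥ (S t).mulVec (α t)) ∧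
    (∀ θ : ℝ → ℝ, Continuous θ →
      (∀ t : ℝ, (α t 0 : ℂ) + (α t 1 : ℝ) * Complex.I
          = (‖(α t 0 : ℂ) + (α t 1 : ℝ) * Complex.I‖ : ℝ)
              * Complex.exp ((θ t : ℝ) * Complex.I)) →
      StrictMono θ) := by
  have hcross (t : ℝ) : α t 0 * ((!![0, -1; 1, 0] * S t) *ᵥ α t) 1
      - α t 1 * ((!![0, -1; 1, 0] * S t) *ᵥ α t) 0 = α t ⬝ᵥ S t *ᵥ α t := by
    rw [← mulVec_mulVec, cross_J_mulVec]
  have hpos (t : ℝ) : 0 < α t ⬝ᵥ S t *ᵥ α t := (hSpos t).dotProduct_mulVec_pos (hne t)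
  refine ⟨fun t => ⟨?_, hpos t⟩, fun θ hθ hαθ => strictMono_of_deriv_pos fun t => ?_⟩
  · rw [(hasDerivAt_pi.mp (hODE t) 0).deriv, (hasDerivAt_pi.mp (hODE t) 1).deriv, hcross]
  · rw [(hasDerivAt_of_planar_eq_norm_mul_exp_mul_I (hODE t) (hne t) hθ.continuousAt
      (.of_forall hαθ)).deriv, hcross]
    exact div_pos (hpos t) (dotProduct_self_star_pos_iff.mpr (hne t))
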